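/- If T is a forest with maximum degree Δ(T), then any partial proper edge coloring of T with at most Δ(T) − 1 precolored edges using colors {1,...,Δ(T)} is extendable to a proper Δ(T)-edge coloring of T. -/

import Mathlib

open SimpleGraph

variable {V : Type*}

/-- Two edges of `G` are adjacent if both are edges, they are distinct,
and they share a vertex. -/
def EdgeAdj (G : SimpleGraph V) (e f : Sym2 V) : Prop :=
  e ∈ G.edgeSet ∧ f ∈ G.edgeSet ∧ e ≠ f ∧ ∃ v, v ∈ e ∧ v ∈ f

/-- A proper edge coloring (with natural-number colors). -/
def IsProperEdgeColoring (G : SimpleGraph V) (C : Sym2 V → ℕ) : Prop :=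
  ∀ ⦃e f⦄, EdgeAdj G e f → C e ≠ C f

/-- A partial proper edge coloring: colored edges are edges of `G`, and
adjacent colored edges receive distinct colors. -/
def IsPartialProperEdgeColoring (G : SimpleGraph V) (φ : Sym2 V → Option ℕ) : Prop :=
  (∀ e, φ e ≠ none → e ∈ G.edgeSet) ∧
  ∀ ⦃e f⦄, EdgeAdj G e f → φ e ≠ none → φ e ≠ φ f

/-- The partial coloring uses colors from `{0, ..., t-1}`. -/
def UsesColors (φ : Sym2 V → Option ℕ) (t : ℕ) : Prop :=
  ∀ e a, φ e = some a → a < t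

/-- The (total) coloring uses colors from `{0, ..., t-1}` on all edges of `G`. -/
def ColorsBelow (G : SimpleGraph V) (C : Sym2 V → ℕ) (t : ℕ) : Prop :=
  ∀ e ∈ G.edgeSet, C e < t

/-- `C` agrees with the partial coloring `φ` on all precolored edges. -/
def ExtendsColoring (C : Sym2 V → ℕ) (φ : Sym2 V → Option ℕ) : Prop :=
  ∀ e a, φ e = some a → C e = a

/-- `φ` extends to a proper edge coloring of `G` with `t` colors. -/
def Extendable (G : SimpleGraph V) (φ : Sym2 V → Option ℕ) (t : ℕ) : Prop :=
  ∃ C, IsProperEdgeColoring G C ∧ ColorsBelow G C t ∧ ExtendsColoring C φ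

/-- The set of precolored edges of `φ`. -/
def Precolored (φ : Sym2 V → Option ℕ) : Set (Sym2 V) := {e | φ e ≠ none}

/-- The chromatic index: least `t` admitting a proper edge coloring with `t` colors. -/
noncomputable def chromaticIndex (G : SimpleGraph V) : ℕ :=
  sInf {t | ∃ C, IsProperEdgeColoring G C ∧ ColorsBelow G C t}

/-- A set of edges is independent (a matching) if no two distinct members share a vertex. -/
def IndependentEdges (S : Set (Sym2 V)) : Prop :=
  ∀ e ∈ S, ∀ f ∈ S, e ≠ f → ∀ v, v ∈ e → v ∉ f

/-!
Induction on the number of edges, for any number `t` of colors bounding all degrees and more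
than the number of precolored edges. Along a longest path `x₀ x₁ x₂ …` of the forest, every
neighbor of `x₁` other than `x₂` is a leaf. If one of these pendant edges is uncolored, delete
it, extend, and color it last: only the at most `t - 1` other edges at `x₁` constrain it.
Otherwise `x₀x₁` carries some color `a`. If every other edge at `x₁` is precolored, forget the
color of `x₀x₁`, extend, and restore `a`, which none of those edges uses. If `x₁x₂` is
uncolored, first precolor it with a color that the precoloring uses nowhere: it exists because
fewer than `t` edges are precolored, and once `x₀x₁` is forgotten the count is again below `t`.
-/

namespace SimpleGraph

theorem adj_of_neighborSet_eq {G : SimpleGraph V} {u v : V} (hu : G.neighborSet u = {v}) :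
    G.Adj u v :=
  show v ∈ G.neighborSet u from hu ▸ rfl

theorem IsAcyclic.exists_adj_forall_adj_ne_neighborSet_eq [Finite V] {G : SimpleGraph V}
    (hG : G.IsAcyclic) {x₀ y₀ : V} (hxy : G.Adj x₀ y₀) :
    ∃ v w u, G.Adj v u ∧ u ≠ w ∧
      ∀ y, G.Adj v y → y ≠ w → G.neighborSet y = {v} := by
  have : Nonempty V := ⟨x₀⟩
  obtain ⟨a, b, p, hp, hmax⟩ := Walk.exists_isPath_forall_isPath_length_le_length G
  cases p with
  | nil => simpa using hmax _ _ _ (Path.singleton hxy).2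
  | cons hac q =>
    rw [Walk.cons_isPath_iff] at hp
    refine ⟨_, q.snd, a, hac.symm, fun h => hp.2 (h ▸ q.getVert_mem_support 1),
      fun y hy hyw =>
        Set.eq_singleton_iff_unique_mem.mpr ⟨hy.symm, fun z (hyz : G.Adj y z) => ?_⟩⟩
    by_contra hzc
    have hyq : y ∉ q.support := fun h => hyw (hG.eq_snd_of_adj_start hp.1 hy h)
    have hr : (Walk.cons hy.symm q).IsPath := hp.1.cons hyq
    have hzr : z ∉ (Walk.cons hy.symm q).support :=
      fun h => hzc (by simpa using hG.eq_snd_of_adj_start hr hyz h)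
    have := hmax _ _ _ (hr.cons (h := hyz.symm) hzr)
    simp only [Walk.length_cons] at this
    omega

end SimpleGraph

theorem Nat.exists_lt_notMem_of_ncard_lt {s : Set ℕ} {t : ℕ} (hs : s.Finite) (h : s.ncard < t) :
    ∃ b < t, b ∉ s := by
  simpa using Set.exists_mem_notMem_of_ncard_lt_ncard (t := Set.Iio t) (by simpa using h) hs

theorem Sym2.mk_ne_mk_of_ne {u v x : V} (huv : u ≠ v) (hxu : x ≠ u) : s(v, x) ≠ s(u, v) := by
  simp [huv.symm, hxu]

open Function

section EdgeColoring

variable {G H : SimpleGraph V} {φ : Sym2 V → Option ℕ} {C : Sym2 V → ℕ} {t : ℕ}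

theorem EdgeAdj.symm {e f : Sym2 V} (h : EdgeAdj G e f) : EdgeAdj G f e :=
  let ⟨he, hf, hne, v, hve, hvf⟩ := h
  ⟨hf, he, hne.symm, v, hvf, hve⟩

theorem EdgeAdj.mono {e f : Sym2 V} (hGH : G ≤ H) (h : EdgeAdj G e f) : EdgeAdj H e f :=
  let ⟨he, hf, hne, hv⟩ := h
  ⟨edgeSet_mono hGH he, edgeSet_mono hGH hf, hne, hv⟩

theorem EdgeAdj.deleteEdges {e f d : Sym2 V} (h : EdgeAdj G e f) (he : e ≠ d) (hf : f ≠ d) :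
    EdgeAdj (G.deleteEdges {d}) e f :=
  let ⟨he', hf', hne, hv⟩ := h
  ⟨by simp [he', he], by simp [hf', hf], hne, hv⟩

theorem EdgeAdj.exists_eq_of_neighborSet_eq {u v : V} {f : Sym2 V}
    (hu : G.neighborSet u = {v}) (h : EdgeAdj G s(u, v) f) :
    ∃ x, G.Adj v x ∧ x ≠ u ∧ f = s(v, x) := by
  obtain ⟨-, hf, hne, z, hz, hzf⟩ := h
  obtain ⟨x, rfl⟩ := Sym2.mem_iff_exists.mp hzf
  rcases Sym2.mem_iff.mp hz with rfl | rfl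
  · have : x ∈ G.neighborSet z := hf
    rw [hu, Set.mem_singleton_iff] at this
    exact absurd (this ▸ rfl) hne
  · exact ⟨x, hf, by rintro rfl; exact hne Sym2.eq_swap, rfl⟩

theorem precolored_update_none [DecidableEq V] (φ : Sym2 V → Option ℕ) (e : Sym2 V) :
    Precolored (update φ e none) = Precolored φ \ {e} := by
  ext f
  by_cases hf : f = e <;> simp [Precolored, hf]

theorem precolored_update_some [DecidableEq V] (φ : Sym2 V → Option ℕ) (e : Sym2 V) (b : ℕ) :
    Precolored (update φ e (some b)) = insert e (Precolored φ) := by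
  ext f
  by_cases hf : f = e <;> simp [Precolored, hf]

theorem UsesColors.update_none [DecidableEq V] (hφ : UsesColors φ t) (e : Sym2 V) :
    UsesColors (update φ e none) t := by
  intro f a hf
  by_cases hfe : f = e
  · simp [hfe] at hf
  · exact hφ f a (by simpa [hfe] using hf)

theorem UsesColors.update_some [DecidableEq V] (hφ : UsesColors φ t) (e : Sym2 V) {b : ℕ}
    (hb : b < t) : UsesColors (update φ e (some b)) t := by
  intro f a hf
  by_cases hfe : f = e
  · simp_all
  · exact hφ f a (by simpa [hfe] using hf)

theorem exists_lt_forall_ne_some_of_ncard_precolored_lt [Finite V]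
    (hcard : (Precolored φ).ncard < t) : ∃ b < t, ∀ f, φ f ≠ some b := by
  obtain ⟨b, hbt, hb⟩ := Nat.exists_lt_notMem_of_ncard_lt
    (s := (fun f => (φ f).getD 0) '' Precolored φ) (Set.toFinite _)
    ((Set.ncard_image_le (Set.toFinite _)).trans_lt hcard)
  exact ⟨b, hbt, fun f hf => hb ⟨f, by simp [Precolored, hf], by simp [hf]⟩⟩

theorem IsPartialProperEdgeColoring.deleteEdges_update_none [DecidableEq V]
    (hφ : IsPartialProperEdgeColoring G φ) (e : Sym2 V) :
    IsPartialProperEdgeColoring (G.deleteEdges {e}) (update φ e none) := by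
  refine ⟨fun f hf => ?_, fun f g hfg hf => ?_⟩
  · by_cases hfe : f = e
    · simp [hfe] at hf
    · rw [update_of_ne hfe] at hf
      simp [hφ.1 f hf, hfe]
  · have hfe : f ≠ e := by rintro rfl; simp at hf
    have hge : g ≠ e := by rintro rfl; simpa using hfg.2.1
    rw [update_of_ne hfe, update_of_ne hge] at *
    exact hφ.2 (hfg.mono (deleteEdges_le _)) hf

theorem IsPartialProperEdgeColoring.update_some [DecidableEq V]
    (hφ : IsPartialProperEdgeColoring G φ) {e : Sym2 V} (he : e ∈ G.edgeSet) {b : ℕ}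
    (hb : ∀ f, φ f ≠ some b) : IsPartialProperEdgeColoring G (update φ e (some b)) := by
  refine ⟨fun f hf => ?_, fun f g hfg hf => ?_⟩
  · by_cases hfe : f = e
    · exact hfe ▸ he
    · exact hφ.1 f (by simpa [hfe] using hf)
  · by_cases hfe : f = e
    · subst hfe
      simpa [update_of_ne hfg.2.2.1.symm] using (hb g).symm
    by_cases hge : g = e
    · subst hge
      simpa [update_of_ne hfe] using hb f
    rw [update_of_ne hfe, update_of_ne hge] at *
    exact hφ.2 hfg hf

theorem IsProperEdgeColoring.update_of_neighborSet_eq [DecidableEq V] {u v : V} {a : ℕ}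
    (hu : G.neighborSet u = {v}) (hC : IsProperEdgeColoring (G.deleteEdges {s(u, v)}) C)
    (ha : ∀ x, G.Adj v x → x ≠ u → C s(v, x) ≠ a) :
    IsProperEdgeColoring G (update C s(u, v) a) := by
  intro f g hfg
  by_cases hf : f = s(u, v)
  · subst hf
    obtain ⟨x, hx, hxu, rfl⟩ := hfg.exists_eq_of_neighborSet_eq hu
    simpa [update_of_ne hfg.2.2.1.symm] using (ha x hx hxu).symm
  by_cases hg : g = s(u, v)
  · subst hg
    obtain ⟨x, hx, hxu, rfl⟩ := hfg.symm.exists_eq_of_neighborSet_eq hu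
    simpa [update_of_ne hf] using ha x hx hxu
  rw [update_of_ne hf, update_of_ne hg]
  exact hC (hfg.deleteEdges hf hg)

end EdgeColoring

section Extension

variable {G : SimpleGraph V} {φ : Sym2 V → Option ℕ} {t : ℕ}

theorem extendable_bot (hφ : IsPartialProperEdgeColoring (⊥ : SimpleGraph V) φ) :
    Extendable ⊥ φ t :=
  ⟨fun _ => 0, fun _ _ h => by simpa using h.1, fun _ h => by simp at h,
    fun e _ he => by simpa using hφ.1 e (by simp [he])⟩

theorem Extendable.of_le {φ₁ : Sym2 V → Option ℕ} (h : Extendable G φ₁ t)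
    (hle : ∀ e a, φ e = some a → φ₁ e = some a) : Extendable G φ t :=
  let ⟨C, hC, hCt, hCφ⟩ := h
  ⟨C, hC, hCt, fun e a he => hCφ e a (hle e a he)⟩

theorem extendable_of_pendant [DecidableEq V] {u v : V} {C : Sym2 V → ℕ} {a : ℕ}
    (hu : G.neighborSet u = {v}) (hC : IsProperEdgeColoring (G.deleteEdges {s(u, v)}) C)
    (hCt : ColorsBelow (G.deleteEdges {s(u, v)}) C t)
    (hCφ : ExtendsColoring C (update φ s(u, v) none)) (hat : a < t)
    (hφa : ∀ b, φ s(u, v) = some b → b = a)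
    (ha : ∀ x, G.Adj v x → x ≠ u → C s(v, x) ≠ a) :
    Extendable G φ t := by
  refine ⟨update C s(u, v) a, hC.update_of_neighborSet_eq hu ha, fun f hf => ?_,
    fun f b hf => ?_⟩
  · by_cases hfe : f = s(u, v)
    · simpa [hfe] using hat
    · rw [update_of_ne hfe]
      exact hCt f (by simp [hf, hfe])
  · by_cases hfe : f = s(u, v)
    · subst hfe
      simpa using (hφa b hf).symm
    · rw [update_of_ne hfe]
      exact hCφ f b (by simpa [hfe] using hf)

theorem extendable_of_pendant_of_eq_none [Finite V] [DecidableEq V] {u v : V}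
    (hu : G.neighborSet u = {v}) (hv : (G.neighborSet v).ncard ≤ t) (hφu : φ s(u, v) = none)
    (h : Extendable (G.deleteEdges {s(u, v)}) (update φ s(u, v) none) t) : Extendable G φ t := by
  obtain ⟨C, hC, hCt, hCφ⟩ := h
  have hvu : u ∈ G.neighborSet v := (adj_of_neighborSet_eq hu).symm
  obtain ⟨a, hat, ha⟩ := Nat.exists_lt_notMem_of_ncard_lt
    (s := (fun x => C s(v, x)) '' (G.neighborSet v \ {u})) (Set.toFinite _)
    ((Set.ncard_image_le (Set.toFinite _)).trans_lt
      ((Set.ncard_sdiff_singleton_lt_of_mem hvu).trans_le hv))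
  exact extendable_of_pendant hu hC hCt hCφ hat (by simp [hφu])
    fun x hx hxu hCx => ha ⟨x, ⟨hx, hxu⟩, hCx⟩

theorem extendable_of_pendant_of_eq_some [DecidableEq V] {u v : V} {a : ℕ}
    (hφ : IsPartialProperEdgeColoring G φ) (hu : G.neighborSet u = {v})
    (hφu : φ s(u, v) = some a) (hat : a < t)
    (hv : ∀ x, G.Adj v x → x ≠ u → φ s(v, x) ≠ none)
    (h : Extendable (G.deleteEdges {s(u, v)}) (update φ s(u, v) none) t) : Extendable G φ t := by
  obtain ⟨C, hC, hCt, hCφ⟩ := h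
  have huv := adj_of_neighborSet_eq hu
  refine extendable_of_pendant hu hC hCt hCφ hat (by simp [hφu]) fun x hx hxu => ?_
  have hne := Sym2.mk_ne_mk_of_ne huv.ne hxu
  obtain ⟨c, hc⟩ := Option.ne_none_iff_exists'.mp (hv x hx hxu)
  have hac : φ s(u, v) ≠ φ s(v, x) :=
    hφ.2 ⟨huv, hx, hne.symm, v, by simp, by simp⟩ (by simp [hφu])
  rw [hCφ _ c (by rwa [update_of_ne hne])]
  rintro rfl
  exact hac (hφu.trans hc.symm)

theorem extendable_of_pendant_of_eq_some_of_eq_none [Finite V] [DecidableEq V] {u v x : V}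
    {a : ℕ} (hφ : IsPartialProperEdgeColoring G φ) (hc : UsesColors φ t)
    (hcard : (Precolored φ).ncard < t) (hu : G.neighborSet u = {v}) (hφu : φ s(u, v) = some a)
    (hvx : G.Adj v x) (hxu : x ≠ u) (hφx : φ s(v, x) = none)
    (hv : ∀ y, G.Adj v y → y ≠ x → φ s(v, y) ≠ none)
    (h : ∀ φ', IsPartialProperEdgeColoring G φ' → UsesColors φ' t →
      (Precolored (update φ' s(u, v) none)).ncard ≤ (Precolored φ).ncard →
      Extendable (G.deleteEdges {s(u, v)}) (update φ' s(u, v) none) t) :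
    Extendable G φ t := by
  obtain ⟨b, hbt, hb⟩ := exists_lt_forall_ne_some_of_ncard_precolored_lt hcard
  have hφ₁ := hφ.update_some (e := s(v, x)) hvx hb
  have hux : s(u, v) ≠ s(v, x) := (Sym2.mk_ne_mk_of_ne (adj_of_neighborSet_eq hu).ne hxu).symm
  refine (extendable_of_pendant_of_eq_some hφ₁ hu (by rwa [update_of_ne hux]) (hc _ _ hφu)
    (fun y hvy hyu => ?_) (h _ hφ₁ (hc.update_some _ hbt) ?_)).of_le fun e c he => ?_
  · by_cases hyx : y = x
    · simp [hyx]
    · rw [update_of_ne (by simp [hyx, hvx.ne])]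
      exact hv y hvy hyx
  · rw [precolored_update_none, precolored_update_some,
      Set.ncard_sdiff_singleton_of_mem (Set.mem_insert_of_mem _ (by simp [Precolored, hφu]))]
    have := Set.ncard_insert_le s(v, x) (Precolored φ)
    omega
  · rwa [update_of_ne (by rintro rfl; simp [hφx] at he)]

end Extension

theorem extendable_of_isAcyclic [Finite V] {t : ℕ} {G : SimpleGraph V} (hG : G.IsAcyclic)
    (hdeg : ∀ v, (G.neighborSet v).ncard ≤ t) {φ : Sym2 V → Option ℕ}
    (hφ : IsPartialProperEdgeColoring G φ) (hc : UsesColors φ t)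
    (hcard : (Precolored φ).ncard ≤ t - 1) : Extendable G φ t := by
  classical
  induction hn : G.edgeSet.ncard using Nat.strong_induction_on generalizing G φ with
  | _ n ih =>
  obtain rfl | hne := eq_or_ne G ⊥
  · exact extendable_bot hφ
  have ih_delete : ∀ {e}, e ∈ G.edgeSet → ∀ {φ'}, IsPartialProperEdgeColoring G φ' →
      UsesColors φ' t → (Precolored (update φ' e none)).ncard ≤ t - 1 →
      Extendable (G.deleteEdges {e}) (update φ' e none) t := fun {_} he {_} hφ' hc' hcard' =>
    ih _ (by rw [← hn, edgeSet_deleteEdges]; exact Set.ncard_sdiff_singleton_lt_of_mem he)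
      (hG.anti (deleteEdges_le _))
      (fun v => (Set.ncard_le_ncard (neighborSet_mono (deleteEdges_le _) v)).trans (hdeg v))
      (hφ'.deleteEdges_update_none _) (hc'.update_none _) hcard' rfl
  have hforget : ∀ e, (Precolored (update φ e none)).ncard ≤ t - 1 := fun e =>
    (Set.ncard_le_ncard (precolored_update_none φ e ▸ Set.sdiff_subset)).trans hcard
  obtain ⟨_, _, hxy⟩ := ne_bot_iff_exists_adj.mp hne
  obtain ⟨v, w, u, hvu, huw, hleaf⟩ := hG.exists_adj_forall_adj_ne_neighborSet_eq hxy
  by_cases hpendant : ∃ y, G.Adj v y ∧ y ≠ w ∧ φ s(y, v) = none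
  · obtain ⟨y, hvy, hyw, hy⟩ := hpendant
    exact extendable_of_pendant_of_eq_none (hleaf y hvy hyw) (hdeg v) hy
      (ih_delete hvy.symm hφ hc (hforget _))
  push Not at hpendant
  have hu := hleaf u hvu huw
  obtain ⟨a, ha⟩ := Option.ne_none_iff_exists'.mp (hpendant u hvu huw)
  by_cases hcolored : ∀ x, G.Adj v x → x ≠ u → φ s(v, x) ≠ none
  · exact extendable_of_pendant_of_eq_some hφ hu ha (hc _ _ ha) hcolored
      (ih_delete hvu.symm hφ hc (hforget _))
  push Not at hcolored
  obtain ⟨x, hvx, hxu, hx⟩ := hcolored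
  obtain rfl : x = w := by
    by_contra hxw
    exact hpendant x hvx hxw (by rwa [Sym2.eq_swap])
  have ht : (Precolored φ).ncard < t := by
    have := ((Set.ncard_pos).2 ⟨u, hvu⟩).trans_le (hdeg v)
    omega
  exact extendable_of_pendant_of_eq_some_of_eq_none hφ hc ht hu ha hvx hxu hx
    (fun y hvy hyx => by rw [Sym2.eq_swap]; exact hpendant y hvy hyx)
    fun φ' hφ' hc' hcard' => ih_delete hvu.symm hφ' hc' (hcard'.trans hcard)

theorem stmt6 [Fintype V] (T : SimpleGraph V) [DecidableRel T.Adj] (hT : T.IsAcyclic)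
    (φ : Sym2 V → Option ℕ) (hφ : IsPartialProperEdgeColoring T φ)
    (hc : UsesColors φ T.maxDegree)
    (hcard : (Precolored φ).ncard ≤ T.maxDegree - 1) :
    Extendable T φ T.maxDegree := by
  refine extendable_of_isAcyclic hT (fun v => ?_) hφ hc hcard
  rw [← Nat.card_coe_set_eq, Nat.card_eq_fintype_card, card_neighborSet_eq_degree]
  exact T.degree_le_maxDegree v
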